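/- (Second-order covariant commutator.) Let A_μ : ℝ⁴ → ℝ (μ = 0,…,3) and φ : ℝ⁴ → ℂ be smooth, and let X, Y be smooth Minkowski-Killing vector fields on ℝ⁴. Then □_A(D_X(D_Yφ)) − D_X(D_Y(□_Aφ)) = Q(F, D_Xφ, Y) + Q(F, D_Yφ, X) + Q(𝓛_XF, φ, Y) + Q(F, φ, [X,Y]) − 2·(X^λF_{λμ})·(m^{μν}F_{νκ}Y^κ)·φ, where [X,Y] is the commutator vector field with components [X,Y]^μ = X^λ∂_λY^μ − Y^λ∂_λX^μ, and (𝓛_XF)_{μν} = X^λ∂_λF_{μν} + (∂_μX^λ)F_{λν} + (∂_νX^λ)F_{μλ}. -/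

import Mathlib

noncomputable section

/-- Point of `ℝ⁴`. -/
abbrev V4 := Fin 4 → ℝ

/-- Partial derivative `∂_μ` of a real-valued function. -/
def pdR (μ : Fin 4) (f : V4 → ℝ) : V4 → ℝ := fun x => fderiv ℝ f x (Pi.single μ 1)

/-- Partial derivative `∂_μ` of a complex-valued function. -/
def pdC (μ : Fin 4) (f : V4 → ℂ) : V4 → ℂ := fun x => fderiv ℝ f x (Pi.single μ 1)

/-- The diagonal entries of the Minkowski metric `m = diag(−1,1,1,1)`. -/
def mSign (μ : Fin 4) : ℝ := if μ = 0 then -1 else 1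

/-- Covariant derivative `D_μφ = ∂_μφ + iA_μφ`. -/
def Dc (A : Fin 4 → V4 → ℝ) (μ : Fin 4) (φ : V4 → ℂ) : V4 → ℂ :=
  fun x => pdC μ φ x + Complex.I * (A μ x) * φ x

/-- Covariant wave operator `□_Aφ = m^{μν}D_μ(D_νφ)`. -/
def boxA (A : Fin 4 → V4 → ℝ) (φ : V4 → ℂ) : V4 → ℂ :=
  fun x => ∑ μ, (mSign μ : ℂ) * Dc A μ (Dc A μ φ) x

/-- Curvature `F_{μν} = ∂_μA_ν − ∂_νA_μ`. -/
def Fcurv (A : Fin 4 → V4 → ℝ) (μ ν : Fin 4) : V4 → ℝ :=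
  fun x => pdR μ (A ν) x - pdR ν (A μ) x

/-- `D_Zφ = Z^μD_μφ` for a vector field with components `Z^μ`. -/
def DZ (A : Fin 4 → V4 → ℝ) (Z : Fin 4 → V4 → ℝ) (φ : V4 → ℂ) : V4 → ℂ :=
  fun x => ∑ μ, (Z μ x : ℂ) * Dc A μ φ x

/-- The trilinear form `Q(G,φ,Z) = 2i·Z^νG_{μν}·D^μφ + i·∂^μ(Z^νG_{μν})·φ`. -/
def Qform (A : Fin 4 → V4 → ℝ) (G : Fin 4 → Fin 4 → V4 → ℝ) (φ : V4 → ℂ)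
    (Z : Fin 4 → V4 → ℝ) : V4 → ℂ :=
  fun x => 2 * Complex.I * ∑ μ, (mSign μ : ℂ) * ((∑ ν, Z ν x * G μ ν x : ℝ) : ℂ) * Dc A μ φ x
    + Complex.I * ((∑ μ, mSign μ * pdR μ (fun y => ∑ ν, Z ν y * G μ ν y) x : ℝ) : ℂ) * φ x

/-- `Z` is a Minkowski-Killing vector field: `∂_μZ_ν + ∂_νZ_μ = 0` with `Z_μ = m_{μν}Z^ν`. -/
def IsKilling (Z : Fin 4 → V4 → ℝ) : Prop :=
  ∀ μ ν x, mSign ν * pdR μ (Z ν) x + mSign μ * pdR ν (Z μ) x = 0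

/-- Lie derivative of an antisymmetric 2-tensor:
`(𝓛_XG)_{μν} = X^λ∂_λG_{μν} + (∂_μX^λ)G_{λν} + (∂_νX^λ)G_{μλ}`. -/
def LieD (X : Fin 4 → V4 → ℝ) (G : Fin 4 → Fin 4 → V4 → ℝ) (μ ν : Fin 4) : V4 → ℝ :=
  fun x => (∑ l, X l x * pdR l (G μ ν) x) + (∑ l, pdR μ (X l) x * G l ν x)
    + (∑ l, pdR ν (X l) x * G μ l x)

/-- Commutator vector field `[X,Y]^μ = X^λ∂_λY^μ − Y^λ∂_λX^μ`. -/
def brkt (X Y : Fin 4 → V4 → ℝ) (μ : Fin 4) : V4 → ℝ :=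
  fun x => ∑ l, (X l x * pdR l (Y μ) x - Y l x * pdR l (X μ) x)

variable {E : Type*} [NormedAddCommGroup E] [NormedSpace ℝ E]

lemma contDiff_pd {f : V4 → E} (hf : ContDiff ℝ (⊤ : ℕ∞) f) (v : V4) :
    ContDiff ℝ (⊤ : ℕ∞) (fun x => fderiv ℝ f x v) :=
  (hf.fderiv_right (by simp)).clm_apply contDiff_const

lemma pd_comm {f : V4 → E} (hf : ContDiff ℝ (⊤ : ℕ∞) f) (v w x : V4) :
    fderiv ℝ (fun y => fderiv ℝ f y v) x w = fderiv ℝ (fun y => fderiv ℝ f y w) x v := by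
  have hdf : DifferentiableAt ℝ (fderiv ℝ f) x :=
    ((hf.fderiv_right (m := (⊤ : ℕ∞)) (by simp)).differentiable (by simp)) x
  have h1 : ∀ u : V4, fderiv ℝ (fun y => fderiv ℝ f y u) x =
      (fderiv ℝ (fderiv ℝ f) x).flip u := by
    intro u
    have := fderiv_clm_apply (c := fderiv ℝ f) (u := fun _ => u) hdf (differentiableAt_const u)
    simpa using this
  have hsym := (hf.contDiffAt (x := x)).isSymmSndFDerivAt (by rw [minSmoothness_of_isRCLikeNormedField]; exact (WithTop.coe_le_coe.mpr (le_top : (2 : ℕ∞) ≤ ⊤) : ((2 : ℕ∞) : WithTop ℕ∞) ≤ ((⊤ : ℕ∞) : WithTop ℕ∞)))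
  rw [h1, h1]
  exact hsym w v

lemma pdC_comm {f : V4 → ℂ} (hf : ContDiff ℝ (⊤ : ℕ∞) f) (μ ν : Fin 4) (x : V4) :
    pdC μ (pdC ν f) x = pdC ν (pdC μ f) x := pd_comm hf _ _ x

lemma pdR_comm {f : V4 → ℝ} (hf : ContDiff ℝ (⊤ : ℕ∞) f) (μ ν : Fin 4) (x : V4) :
    pdR μ (pdR ν f) x = pdR ν (pdR μ f) x := pd_comm hf _ _ x

-- smoothness

lemma pdR_smooth {f : V4 → ℝ} (hf : ContDiff ℝ (⊤ : ℕ∞) f) (μ : Fin 4) : ContDiff ℝ (⊤ : ℕ∞) (pdR μ f) :=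
  contDiff_pd hf _

lemma pdC_smooth {f : V4 → ℂ} (hf : ContDiff ℝ (⊤ : ℕ∞) f) (μ : Fin 4) : ContDiff ℝ (⊤ : ℕ∞) (pdC μ f) :=
  contDiff_pd hf _

lemma ofReal_smooth {g : V4 → ℝ} (hg : ContDiff ℝ (⊤ : ℕ∞) g) : ContDiff ℝ (⊤ : ℕ∞) (fun y => (g y : ℂ)) :=
  Complex.ofRealCLM.contDiff.comp hg

lemma Dc_smooth {A : Fin 4 → V4 → ℝ} (hA : ∀ μ, ContDiff ℝ (⊤ : ℕ∞) (A μ)) {φ : V4 → ℂ}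
    (hφ : ContDiff ℝ (⊤ : ℕ∞) φ) (μ : Fin 4) : ContDiff ℝ (⊤ : ℕ∞) (Dc A μ φ) := by
  unfold Dc
  exact (pdC_smooth hφ μ).add ((contDiff_const.mul (ofReal_smooth (hA μ))).mul hφ)

-- differentiability at a point

lemma dAt {f : V4 → ℂ} (hf : ContDiff ℝ (⊤ : ℕ∞) f) (x : V4) : DifferentiableAt ℝ f x :=
  (hf.differentiable (by simp)) x

lemma dAtR {f : V4 → ℝ} (hf : ContDiff ℝ (⊤ : ℕ∞) f) (x : V4) : DifferentiableAt ℝ f x :=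
  (hf.differentiable (by simp)) x

-- Leibniz / linearity, pointwise with DifferentiableAt hypotheses

variable {μ ν : Fin 4} {x : V4}

lemma pdC_add {f g : V4 → ℂ} (hf : DifferentiableAt ℝ f x) (hg : DifferentiableAt ℝ g x) :
    pdC μ (fun y => f y + g y) x = pdC μ f x + pdC μ g x := by
  simp [pdC, fderiv_fun_add hf hg]

lemma pdR_add {f g : V4 → ℝ} (hf : DifferentiableAt ℝ f x) (hg : DifferentiableAt ℝ g x) :
    pdR μ (fun y => f y + g y) x = pdR μ f x + pdR μ g x := by
  simp [pdR, fderiv_fun_add hf hg]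

lemma pdC_sum {s : Finset (Fin 4)} {f : Fin 4 → V4 → ℂ}
    (hf : ∀ i ∈ s, DifferentiableAt ℝ (f i) x) :
    pdC μ (fun y => ∑ i ∈ s, f i y) x = ∑ i ∈ s, pdC μ (f i) x := by
  simp [pdC, fderiv_fun_sum hf]

lemma pdR_sum {s : Finset (Fin 4)} {f : Fin 4 → V4 → ℝ}
    (hf : ∀ i ∈ s, DifferentiableAt ℝ (f i) x) :
    pdR μ (fun y => ∑ i ∈ s, f i y) x = ∑ i ∈ s, pdR μ (f i) x := by
  simp [pdR, fderiv_fun_sum hf]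

lemma pdC_mul {f g : V4 → ℂ} (hf : DifferentiableAt ℝ f x) (hg : DifferentiableAt ℝ g x) :
    pdC μ (fun y => f y * g y) x = pdC μ f x * g x + f x * pdC μ g x := by
  simp [pdC, fderiv_fun_mul hf hg]; ring

lemma pdR_mul {f g : V4 → ℝ} (hf : DifferentiableAt ℝ f x) (hg : DifferentiableAt ℝ g x) :
    pdR μ (fun y => f y * g y) x = pdR μ f x * g x + f x * pdR μ g x := by
  simp [pdR, fderiv_fun_mul hf hg]; ring

lemma pdC_const_mul (c : ℂ) {f : V4 → ℂ} (hf : DifferentiableAt ℝ f x) :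
    pdC μ (fun y => c * f y) x = c * pdC μ f x := by
  simp [pdC, fderiv_const_mul hf]

lemma pdR_const_mul (c : ℝ) {f : V4 → ℝ} (hf : DifferentiableAt ℝ f x) :
    pdR μ (fun y => c * f y) x = c * pdR μ f x := by
  simp [pdR, fderiv_const_mul hf]

lemma pdC_ofReal {g : V4 → ℝ} (hg : DifferentiableAt ℝ g x) :
    pdC μ (fun y => (g y : ℂ)) x = (pdR μ g x : ℂ) := by
  have h := (Complex.ofRealCLM.hasFDerivAt.comp x hg.hasFDerivAt).fderiv
  have h2 : (fun y => ((g y : ℝ) : ℂ)) = ⇑Complex.ofRealCLM ∘ g := rfl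
  rw [pdC, pdR, h2, h]
  simp

variable {μ ν : Fin 4} {x : V4}

-- combined: pdC of c * ↑g * f

lemma pdC_cr_mul (c : ℂ) {g : V4 → ℝ} {f : V4 → ℂ} (hg : DifferentiableAt ℝ g x)
    (hf : DifferentiableAt ℝ f x) :
    pdC μ (fun y => c * (g y : ℂ) * f y) x
      = c * ((pdR μ g x : ℂ) * f x + (g x : ℂ) * pdC μ f x) := by
  have h1 : (fun y => c * (g y : ℂ) * f y) = fun y => c * ((g y : ℂ) * f y) := by
    funext y; ring
  have hg' : DifferentiableAt ℝ (fun y => ((g y : ℝ) : ℂ)) x :=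
    (Complex.ofRealCLM.differentiable.differentiableAt).comp x hg
  rw [h1, pdC_const_mul c (f := fun y => (g y : ℂ) * f y) (hg'.mul hf), pdC_mul hg' hf, pdC_ofReal hg]

-- Dc lemmas

variable {A : Fin 4 → V4 → ℝ}

lemma Dc_add {f g : V4 → ℂ} (hf : DifferentiableAt ℝ f x) (hg : DifferentiableAt ℝ g x) :
    Dc A μ (fun y => f y + g y) x = Dc A μ f x + Dc A μ g x := by
  simp only [Dc, pdC_add hf hg]; ring

lemma Dc_sum {f : Fin 4 → V4 → ℂ} (hf : ∀ i, DifferentiableAt ℝ (f i) x) :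
    Dc A μ (fun y => ∑ i, f i y) x = ∑ i, Dc A μ (f i) x := by
  simp only [Dc, pdC_sum (fun i _ => hf i), Finset.mul_sum, Finset.sum_add_distrib]

lemma Dc_const_mul (c : ℂ) {f : V4 → ℂ} (hf : DifferentiableAt ℝ f x) :
    Dc A μ (fun y => c * f y) x = c * Dc A μ f x := by
  simp only [Dc, pdC_const_mul c hf]; ring

lemma Dc_rmul {g : V4 → ℝ} {f : V4 → ℂ} (hg : DifferentiableAt ℝ g x)
    (hf : DifferentiableAt ℝ f x) :
    Dc A μ (fun y => (g y : ℂ) * f y) x = (pdR μ g x : ℂ) * f x + (g x : ℂ) * Dc A μ f x := by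
  have h1 : (fun y => (g y : ℂ) * f y) = fun y => (1:ℂ) * (g y : ℂ) * f y := by
    funext y; ring
  simp only [Dc, h1, pdC_cr_mul 1 hg hf]; ring

lemma Dc_cr_mul (c : ℂ) {g : V4 → ℝ} {f : V4 → ℂ} (hg : DifferentiableAt ℝ g x)
    (hf : DifferentiableAt ℝ f x) :
    Dc A μ (fun y => c * (g y : ℂ) * f y) x
      = c * ((pdR μ g x : ℂ) * f x + (g x : ℂ) * Dc A μ f x) := by
  simp only [Dc, pdC_cr_mul c hg hf]; ring

-- the fundamental commutator

lemma Dc_comm (hA : ∀ κ, ContDiff ℝ (⊤ : ℕ∞) (A κ)) {ψ : V4 → ℂ} (hψ : ContDiff ℝ (⊤ : ℕ∞) ψ) :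
    Dc A μ (Dc A ν ψ) x = Dc A ν (Dc A μ ψ) x + Complex.I * (Fcurv A μ ν x : ℂ) * ψ x := by
  have hdψ : ∀ κ, DifferentiableAt ℝ (pdC κ ψ) x := fun κ => dAt (pdC_smooth hψ κ) x

  have key : ∀ a b : Fin 4, Dc A a (Dc A b ψ) x =
      pdC a (pdC b ψ) x + Complex.I * ((pdR a (A b) x : ℂ) * ψ x + (A b x : ℂ) * pdC a ψ x)
        + Complex.I * (A a x : ℂ) * (pdC b ψ x + Complex.I * (A b x : ℂ) * ψ x) := by
    intro a b
    have hDc : Dc A b ψ = fun y => pdC b ψ y + Complex.I * (A b y : ℂ) * ψ y := rfl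
    have hab : DifferentiableAt ℝ (fun y => Complex.I * ((A b y : ℝ) : ℂ) * ψ y) x :=
      ((differentiableAt_const _).mul
        ((Complex.ofRealCLM.differentiable.differentiableAt).comp x (dAtR (hA b) x))).mul
        (dAt hψ x)
    rw [Dc, hDc, pdC_add (hdψ b) hab, pdC_cr_mul Complex.I (dAtR (hA b) x) (dAt hψ x)]
  rw [key μ ν, key ν μ, pdC_comm hψ μ ν, Fcurv]
  push_cast
  ring

-- smoothness of composites

lemma Fcurv_smooth (hA : ∀ κ, ContDiff ℝ (⊤ : ℕ∞) (A κ)) : ContDiff ℝ (⊤ : ℕ∞) (Fcurv A μ ν) :=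
  (pdR_smooth (hA ν) μ).sub (pdR_smooth (hA μ) ν)

lemma DZ_smooth (hA : ∀ κ, ContDiff ℝ (⊤ : ℕ∞) (A κ)) {Z : Fin 4 → V4 → ℝ}
    (hZ : ∀ κ, ContDiff ℝ (⊤ : ℕ∞) (Z κ)) {φ : V4 → ℂ} (hφ : ContDiff ℝ (⊤ : ℕ∞) φ) :
    ContDiff ℝ (⊤ : ℕ∞) (DZ A Z φ) := by
  unfold DZ
  exact ContDiff.sum fun i _ => (ofReal_smooth (hZ i)).mul (Dc_smooth hA hφ i)

lemma boxA_smooth (hA : ∀ κ, ContDiff ℝ (⊤ : ℕ∞) (A κ)) {φ : V4 → ℂ} (hφ : ContDiff ℝ (⊤ : ℕ∞) φ) :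
    ContDiff ℝ (⊤ : ℕ∞) (boxA A φ) := by
  unfold boxA
  exact ContDiff.sum fun i _ => contDiff_const.mul (Dc_smooth hA (Dc_smooth hA hφ i) i)

lemma msq (s : Fin 4) : mSign s * mSign s = 1 := by unfold mSign; split <;> norm_num

lemma killing_raise {Z : Fin 4 → V4 → ℝ} (hK : IsKilling Z) (μ κ : Fin 4) (x : V4) :
    mSign κ * pdR κ (Z μ) x = -(mSign μ * pdR μ (Z κ) x) := by
  have h := hK κ μ x
  have hμ := msq μ
  have hκ := msq κ
  linear_combination (mSign μ * mSign κ) * h - (mSign κ * pdR κ (Z μ) x) * hμ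
    - (mSign μ * pdR μ (Z κ) x) * hκ

lemma killing_deriv {Z : Fin 4 → V4 → ℝ} (hZ : ∀ κ, ContDiff ℝ (⊤ : ℕ∞) (Z κ)) (hK : IsKilling Z)
    (a μ ν : Fin 4) (x : V4) :
    mSign ν * pdR a (pdR μ (Z ν)) x + mSign μ * pdR a (pdR ν (Z μ)) x = 0 := by
  have h0 : (fun y => mSign ν * pdR μ (Z ν) y + mSign μ * pdR ν (Z μ) y) = fun _ => (0:ℝ) :=
    funext (hK μ ν)
  have h1 : pdR a (fun y => mSign ν * pdR μ (Z ν) y + mSign μ * pdR ν (Z μ) y) x = 0 := by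
    rw [h0]; simp [pdR]
  rwa [pdR_add (f := fun y => mSign ν * pdR μ (Z ν) y) (g := fun y => mSign μ * pdR ν (Z μ) y)
      ((differentiable_const _).differentiableAt.mul (dAtR (pdR_smooth (hZ ν) μ) x))
      ((differentiable_const _).differentiableAt.mul (dAtR (pdR_smooth (hZ μ) ν) x)),
    pdR_const_mul _ (dAtR (pdR_smooth (hZ ν) μ) x),
    pdR_const_mul _ (dAtR (pdR_smooth (hZ μ) ν) x)] at h1

lemma killing_second {Z : Fin 4 → V4 → ℝ} (hZ : ∀ κ, ContDiff ℝ (⊤ : ℕ∞) (Z κ)) (hK : IsKilling Z)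
    (a b c : Fin 4) (x : V4) : pdR a (pdR b (Z c)) x = 0 := by
  have hs : ∀ a b c : Fin 4, pdR a (pdR b (Z c)) x = pdR b (pdR a (Z c)) x :=
    fun a b c => pdR_comm (hZ c) a b x
  have hk : ∀ a b c : Fin 4,
      mSign c * pdR a (pdR b (Z c)) x = -(mSign b * pdR a (pdR c (Z b)) x) := by
    intro a b c; have := killing_deriv hZ hK a b c x; linarith
  have h0 : mSign c * pdR a (pdR b (Z c)) x = -(mSign c * pdR a (pdR b (Z c)) x) := by
    calc mSign c * pdR a (pdR b (Z c)) x
        = -(mSign b * pdR a (pdR c (Z b)) x) := hk a b c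
      _ = -(mSign b * pdR c (pdR a (Z b)) x) := by rw [hs a c b]
      _ = mSign a * pdR c (pdR b (Z a)) x := by have := hk c a b; linarith
      _ = mSign a * pdR b (pdR c (Z a)) x := by rw [hs c b a]
      _ = -(mSign c * pdR b (pdR a (Z c)) x) := by have := hk b c a; linarith
      _ = -(mSign c * pdR a (pdR b (Z c)) x) := by rw [hs b a c]
  have h1 : mSign c * pdR a (pdR b (Z c)) x = 0 := by linarith
  have hms := msq c
  linear_combination mSign c * h1 - pdR a (pdR b (Z c)) x * hms

section L1

variable {A Z : Fin 4 → V4 → ℝ} {ψ : V4 → ℂ}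

-- first derivative of D_Z ψ

lemma DcDZ (hA : ∀ κ, ContDiff ℝ (⊤ : ℕ∞) (A κ)) (hZ : ∀ κ, ContDiff ℝ (⊤ : ℕ∞) (Z κ))
    (hψ : ContDiff ℝ (⊤ : ℕ∞) ψ) (μ : Fin 4) (y : V4) :
    Dc A μ (DZ A Z ψ) y = ∑ ν, ((pdR μ (Z ν) y : ℂ) * Dc A ν ψ y
      + (Z ν y : ℂ) * Dc A μ (Dc A ν ψ) y) := by
  have h : DZ A Z ψ = fun y => ∑ ν, ((Z ν y : ℝ) : ℂ) * Dc A ν ψ y := rfl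
  rw [h, Dc_sum (fun i => dAt ((ofReal_smooth (hZ i)).mul (Dc_smooth hA hψ i)) y)]
  exact Finset.sum_congr rfl fun ν _ => Dc_rmul (dAtR (hZ ν) y) (dAt (Dc_smooth hA hψ ν) y)

-- second derivative of D_Z ψ

lemma DcDcDZ (hA : ∀ κ, ContDiff ℝ (⊤ : ℕ∞) (A κ)) (hZ : ∀ κ, ContDiff ℝ (⊤ : ℕ∞) (Z κ))
    (hψ : ContDiff ℝ (⊤ : ℕ∞) ψ) (μ : Fin 4) (x : V4) :
    Dc A μ (Dc A μ (DZ A Z ψ)) x = ∑ ν,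
      ((pdR μ (pdR μ (Z ν)) x : ℂ) * Dc A ν ψ x
        + 2 * (pdR μ (Z ν) x : ℂ) * Dc A μ (Dc A ν ψ) x
        + (Z ν x : ℂ) * Dc A μ (Dc A μ (Dc A ν ψ)) x) := by
  have h : Dc A μ (DZ A Z ψ) = fun y => ∑ ν, ((pdR μ (Z ν) y : ℂ) * Dc A ν ψ y
      + (Z ν y : ℂ) * Dc A μ (Dc A ν ψ) y) := funext (DcDZ hA hZ hψ μ)
  rw [h, Dc_sum (fun i => dAt (((ofReal_smooth (pdR_smooth (hZ i) μ)).mul (Dc_smooth hA hψ i)).add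
    ((ofReal_smooth (hZ i)).mul (Dc_smooth hA (Dc_smooth hA hψ i) μ))) x)]
  refine Finset.sum_congr rfl fun ν _ => ?_
  rw [Dc_add (dAt ((ofReal_smooth (pdR_smooth (hZ ν) μ)).mul (Dc_smooth hA hψ ν)) x)
      (dAt ((ofReal_smooth (hZ ν)).mul (Dc_smooth hA (Dc_smooth hA hψ ν) μ)) x),
    Dc_rmul (dAtR (pdR_smooth (hZ ν) μ) x) (dAt (Dc_smooth hA hψ ν) x),
    Dc_rmul (dAtR (hZ ν) x) (dAt (Dc_smooth hA (Dc_smooth hA hψ ν) μ) x)]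
  ring

-- derivative of box ψ

lemma DcBox (hA : ∀ κ, ContDiff ℝ (⊤ : ℕ∞) (A κ)) (hψ : ContDiff ℝ (⊤ : ℕ∞) ψ) (ν : Fin 4) (y : V4) :
    Dc A ν (boxA A ψ) y = ∑ μ, (mSign μ : ℂ) * Dc A ν (Dc A μ (Dc A μ ψ)) y := by
  have h : boxA A ψ = fun y => ∑ μ, (mSign μ : ℂ) * Dc A μ (Dc A μ ψ) y := rfl
  rw [h, Dc_sum (fun i => dAt (contDiff_const.mul (Dc_smooth hA (Dc_smooth hA hψ i) i)) y)]
  exact Finset.sum_congr rfl fun μ _ =>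
    Dc_const_mul _ (dAt (Dc_smooth hA (Dc_smooth hA hψ μ) μ) y)

-- triple commutator

lemma trip (hA : ∀ κ, ContDiff ℝ (⊤ : ℕ∞) (A κ)) (hψ : ContDiff ℝ (⊤ : ℕ∞) ψ) (μ ν : Fin 4) (x : V4) :
    Dc A μ (Dc A μ (Dc A ν ψ)) x - Dc A ν (Dc A μ (Dc A μ ψ)) x
      = 2 * Complex.I * (Fcurv A μ ν x : ℂ) * Dc A μ ψ x
        + Complex.I * (pdR μ (Fcurv A μ ν) x : ℂ) * ψ x := by
  have h1 : Dc A μ (Dc A ν ψ) = fun y => Dc A ν (Dc A μ ψ) y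
      + Complex.I * (Fcurv A μ ν y : ℂ) * ψ y := funext fun y => Dc_comm hA hψ
  have h2 : Dc A μ (Dc A μ (Dc A ν ψ)) x = Dc A μ (Dc A ν (Dc A μ ψ)) x
      + Complex.I * ((pdR μ (Fcurv A μ ν) x : ℂ) * ψ x + (Fcurv A μ ν x : ℂ) * Dc A μ ψ x) := by
    rw [h1, Dc_add (dAt (Dc_smooth hA (Dc_smooth hA hψ μ) ν) x)
      (dAt ((contDiff_const.mul (ofReal_smooth (Fcurv_smooth hA))).mul hψ) x),
      Dc_cr_mul Complex.I (dAtR (Fcurv_smooth hA) x) (dAt hψ x)]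
  have h3 : Dc A μ (Dc A ν (Dc A μ ψ)) x = Dc A ν (Dc A μ (Dc A μ ψ)) x
      + Complex.I * (Fcurv A μ ν x : ℂ) * Dc A μ ψ x := Dc_comm hA (Dc_smooth hA hψ μ)
  rw [h2, h3]; ring

end L1

lemma add_dsum {E G : Fin 4 → Fin 4 → ℂ} :
    ((∑ μ, ∑ ν, E μ ν) + ∑ μ, ∑ ν, G μ ν) = ∑ μ, ∑ ν, (E μ ν + G μ ν) := by
  simp [Finset.sum_add_distrib]

lemma sub_dsum {E G : Fin 4 → Fin 4 → ℂ} :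
    ((∑ μ, ∑ ν, E μ ν) - ∑ μ, ∑ ν, G μ ν) = ∑ μ, ∑ ν, (E μ ν - G μ ν) := by
  simp [Finset.sum_sub_distrib]

lemma comm_box {A Z : Fin 4 → V4 → ℝ} {ψ : V4 → ℂ}
    (hA : ∀ κ, ContDiff ℝ (⊤ : ℕ∞) (A κ)) (hZ : ∀ κ, ContDiff ℝ (⊤ : ℕ∞) (Z κ))
    (hψ : ContDiff ℝ (⊤ : ℕ∞) ψ) (hK : IsKilling Z) (x : V4) :
    boxA A (DZ A Z ψ) x - DZ A Z (boxA A ψ) x = Qform A (Fcurv A) ψ Z x := by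
  -- expanded forms
  have hbox : boxA A (DZ A Z ψ) x = ∑ μ, ∑ ν,
      (mSign μ : ℂ) * ((pdR μ (pdR μ (Z ν)) x : ℂ) * Dc A ν ψ x
        + 2 * (pdR μ (Z ν) x : ℂ) * Dc A μ (Dc A ν ψ) x
        + (Z ν x : ℂ) * Dc A μ (Dc A μ (Dc A ν ψ)) x) := by
    unfold boxA
    exact Finset.sum_congr rfl fun μ _ => by
      rw [DcDcDZ hA hZ hψ μ x, Finset.mul_sum]
  have hdzbox : DZ A Z (boxA A ψ) x = ∑ μ, ∑ ν,
      (mSign μ : ℂ) * ((Z ν x : ℂ) * Dc A ν (Dc A μ (Dc A μ ψ)) x) := by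
    unfold DZ
    have h1 : ∀ ν, (Z ν x : ℂ) * Dc A ν (boxA A ψ) x
        = ∑ μ, (mSign μ : ℂ) * ((Z ν x : ℂ) * Dc A ν (Dc A μ (Dc A μ ψ)) x) := fun ν => by
      rw [DcBox hA hψ ν x, Finset.mul_sum]
      exact Finset.sum_congr rfl fun μ _ => by ring
    exact (Finset.sum_congr rfl fun ν _ => h1 ν).trans Finset.sum_comm
  -- pointwise key identity
  have key : ∀ μ ν,
      (mSign μ : ℂ) * ((pdR μ (pdR μ (Z ν)) x : ℂ) * Dc A ν ψ x
        + 2 * (pdR μ (Z ν) x : ℂ) * Dc A μ (Dc A ν ψ) x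
        + (Z ν x : ℂ) * Dc A μ (Dc A μ (Dc A ν ψ)) x)
      - (mSign μ : ℂ) * ((Z ν x : ℂ) * Dc A ν (Dc A μ (Dc A μ ψ)) x)
      = ((mSign μ : ℂ) * ((pdR μ (Z ν) x : ℂ) * Dc A μ (Dc A ν ψ) x)
          + (mSign μ : ℂ) * ((pdR μ (Z ν) x : ℂ) * Dc A ν (Dc A μ ψ) x))
        + (mSign μ : ℂ) * (Complex.I * (pdR μ (Z ν) x : ℂ) * (Fcurv A μ ν x : ℂ) * ψ x
          + 2 * Complex.I * (Z ν x : ℂ) * (Fcurv A μ ν x : ℂ) * Dc A μ ψ x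
          + Complex.I * (Z ν x : ℂ) * (pdR μ (Fcurv A μ ν) x : ℂ) * ψ x) := by
    intro μ ν
    have ht := trip hA hψ μ ν x
    have hc := Dc_comm (μ := μ) (ν := ν) (x := x) hA hψ
    have hk2 := killing_second hZ hK μ μ ν x
    rw [hk2]
    push_cast
    linear_combination (mSign μ : ℂ) * (Z ν x : ℂ) * ht
      + (mSign μ : ℂ) * (pdR μ (Z ν) x : ℂ) * hc
  -- cancellation of the symmetric part by the Killing condition
  have hswap : ∑ μ, ∑ ν, ((mSign μ : ℂ) * ((pdR μ (Z ν) x : ℂ) * Dc A μ (Dc A ν ψ) x)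
        + (mSign μ : ℂ) * ((pdR μ (Z ν) x : ℂ) * Dc A ν (Dc A μ ψ) x)) = 0 := by
    have h2 : ∑ μ, ∑ ν, (mSign μ : ℂ) * ((pdR μ (Z ν) x : ℂ) * Dc A ν (Dc A μ ψ) x)
        = -∑ μ, ∑ ν, (mSign μ : ℂ) * ((pdR μ (Z ν) x : ℂ) * Dc A μ (Dc A ν ψ) x) := by
      rw [Finset.sum_comm, ← Finset.sum_neg_distrib]
      refine Finset.sum_congr rfl fun a _ => ?_
      rw [← Finset.sum_neg_distrib]
      refine Finset.sum_congr rfl fun b _ => ?_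
      have hr : ((mSign b * pdR b (Z a) x : ℝ) : ℂ) = ((-(mSign a * pdR a (Z b) x) : ℝ) : ℂ) :=
        congrArg _ (killing_raise hK a b x)
      push_cast at hr
      linear_combination Dc A a (Dc A b ψ) x * hr
    simp only [Finset.sum_add_distrib, h2]
    ring
  -- normal form of Qform
  have hpd : ∀ μ, pdR μ (fun y => ∑ ν, Z ν y * Fcurv A μ ν y) x
      = ∑ ν, (pdR μ (Z ν) x * Fcurv A μ ν x + Z ν x * pdR μ (Fcurv A μ ν) x) := fun μ => by
    rw [pdR_sum (fun i _ => dAtR ((hZ i).mul (Fcurv_smooth hA)) x)]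
    exact Finset.sum_congr rfl fun ν _ =>
      pdR_mul (dAtR (hZ ν) x) (dAtR (Fcurv_smooth hA) x)
  have hQ : Qform A (Fcurv A) ψ Z x
      = (∑ μ, ∑ ν, (mSign μ : ℂ) * (2 * Complex.I * (Z ν x : ℂ) * (Fcurv A μ ν x : ℂ)
          * Dc A μ ψ x))
        + ∑ μ, ∑ ν, (mSign μ : ℂ) * (Complex.I * (pdR μ (Z ν) x : ℂ) * (Fcurv A μ ν x : ℂ) * ψ x
          + Complex.I * (Z ν x : ℂ) * (pdR μ (Fcurv A μ ν) x : ℂ) * ψ x) := by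
    unfold Qform
    congr 1
    · simp only [Complex.ofReal_sum, Complex.ofReal_mul, Finset.mul_sum, Finset.sum_mul]
      exact Finset.sum_congr rfl fun μ _ => Finset.sum_congr rfl fun ν _ => by ring
    · simp only [hpd, Complex.ofReal_sum, Complex.ofReal_add, Complex.ofReal_mul,
        Finset.mul_sum, Finset.sum_mul]
      exact Finset.sum_congr rfl fun μ _ => Finset.sum_congr rfl fun ν _ => by ring
  -- assemble
  rw [hbox, hdzbox, sub_dsum]
  have hkey : (∑ μ, ∑ ν, ((mSign μ : ℂ) * ((pdR μ (pdR μ (Z ν)) x : ℂ) * Dc A ν ψ x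
        + 2 * (pdR μ (Z ν) x : ℂ) * Dc A μ (Dc A ν ψ) x
        + (Z ν x : ℂ) * Dc A μ (Dc A μ (Dc A ν ψ)) x)
      - (mSign μ : ℂ) * ((Z ν x : ℂ) * Dc A ν (Dc A μ (Dc A μ ψ)) x)))
      = ∑ μ, ∑ ν, (((mSign μ : ℂ) * ((pdR μ (Z ν) x : ℂ) * Dc A μ (Dc A ν ψ) x)
          + (mSign μ : ℂ) * ((pdR μ (Z ν) x : ℂ) * Dc A ν (Dc A μ ψ) x))
        + (mSign μ : ℂ) * (Complex.I * (pdR μ (Z ν) x : ℂ) * (Fcurv A μ ν x : ℂ) * ψ x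
          + 2 * Complex.I * (Z ν x : ℂ) * (Fcurv A μ ν x : ℂ) * Dc A μ ψ x
          + Complex.I * (Z ν x : ℂ) * (pdR μ (Fcurv A μ ν) x : ℂ) * ψ x)) :=
    Finset.sum_congr rfl fun μ _ => Finset.sum_congr rfl fun ν _ => key μ ν
  rw [hkey, hQ, add_dsum]
  have hsplit : (∑ μ : Fin 4, ∑ ν : Fin 4, (((mSign μ : ℂ) * ((pdR μ (Z ν) x : ℂ) * Dc A μ (Dc A ν ψ) x)
          + (mSign μ : ℂ) * ((pdR μ (Z ν) x : ℂ) * Dc A ν (Dc A μ ψ) x))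
        + (mSign μ : ℂ) * (Complex.I * (pdR μ (Z ν) x : ℂ) * (Fcurv A μ ν x : ℂ) * ψ x
          + 2 * Complex.I * (Z ν x : ℂ) * (Fcurv A μ ν x : ℂ) * Dc A μ ψ x
          + Complex.I * (Z ν x : ℂ) * (pdR μ (Fcurv A μ ν) x : ℂ) * ψ x)))
      = (∑ μ, ∑ ν, ((mSign μ : ℂ) * ((pdR μ (Z ν) x : ℂ) * Dc A μ (Dc A ν ψ) x)
          + (mSign μ : ℂ) * ((pdR μ (Z ν) x : ℂ) * Dc A ν (Dc A μ ψ) x)))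
        + ∑ μ, ∑ ν, ((mSign μ : ℂ) * (2 * Complex.I * (Z ν x : ℂ) * (Fcurv A μ ν x : ℂ)
            * Dc A μ ψ x)
          + (mSign μ : ℂ) * (Complex.I * (pdR μ (Z ν) x : ℂ) * (Fcurv A μ ν x : ℂ) * ψ x
            + Complex.I * (Z ν x : ℂ) * (pdR μ (Fcurv A μ ν) x : ℂ) * ψ x)) := by
    rw [add_dsum]
    exact Finset.sum_congr rfl fun μ _ => Finset.sum_congr rfl fun ν _ => by ring
  rw [hsplit, hswap, zero_add]

def YGf (A Y : Fin 4 → V4 → ℝ) (μ : Fin 4) : V4 → ℝ :=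
  fun y => ∑ ν, Y ν y * Fcurv A μ ν y

def Tf (A Y : Fin 4 → V4 → ℝ) : V4 → ℝ :=
  fun y => ∑ μ, mSign μ * pdR μ (YGf A Y μ) y

section L2

variable {A X Y : Fin 4 → V4 → ℝ} {φ : V4 → ℂ}

lemma YGf_smooth (hA : ∀ κ, ContDiff ℝ (⊤ : ℕ∞) (A κ)) (hY : ∀ κ, ContDiff ℝ (⊤ : ℕ∞) (Y κ)) (μ : Fin 4) :
    ContDiff ℝ (⊤ : ℕ∞) (YGf A Y μ) :=
  ContDiff.sum fun i _ => (hY i).mul (Fcurv_smooth hA)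

lemma Tf_smooth (hA : ∀ κ, ContDiff ℝ (⊤ : ℕ∞) (A κ)) (hY : ∀ κ, ContDiff ℝ (⊤ : ℕ∞) (Y κ)) :
    ContDiff ℝ (⊤ : ℕ∞) (Tf A Y) :=
  ContDiff.sum fun i _ => contDiff_const.mul (pdR_smooth (YGf_smooth hA hY i) i)

lemma pdR_YGf (hA : ∀ κ, ContDiff ℝ (⊤ : ℕ∞) (A κ)) (hY : ∀ κ, ContDiff ℝ (⊤ : ℕ∞) (Y κ))
    (l μ : Fin 4) (x : V4) :
    pdR l (YGf A Y μ) x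
      = ∑ ν, (pdR l (Y ν) x * Fcurv A μ ν x + Y ν x * pdR l (Fcurv A μ ν) x) := by
  have h : YGf A Y μ = fun y => ∑ ν, Y ν y * Fcurv A μ ν y := rfl
  rw [h, pdR_sum (fun i _ => dAtR ((hY i).mul (Fcurv_smooth hA)) x)]
  exact Finset.sum_congr rfl fun ν _ =>
    pdR_mul (dAtR (hY ν) x) (dAtR (Fcurv_smooth hA) x)

-- the first-order vector identity (no Killing needed)

lemma vecid (hA : ∀ κ, ContDiff ℝ (⊤ : ℕ∞) (A κ)) (hY : ∀ κ, ContDiff ℝ (⊤ : ℕ∞) (Y κ)) (μ : Fin 4) (x : V4) :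
    (∑ l, X l x * pdR l (YGf A Y μ) x) + (∑ k, pdR μ (X k) x * YGf A Y k x)
      = (∑ ν, Y ν x * LieD X (Fcurv A) μ ν x) + (∑ ν, brkt X Y ν x * Fcurv A μ ν x) := by
  simp only [pdR_YGf hA hY, YGf, LieD, brkt]
  simp only [Fin.sum_univ_four]
  ring

lemma LieD_smooth (hA : ∀ κ, ContDiff ℝ (⊤ : ℕ∞) (A κ)) (hX : ∀ κ, ContDiff ℝ (⊤ : ℕ∞) (X κ)) (μ ν : Fin 4) :
    ContDiff ℝ (⊤ : ℕ∞) (LieD X (Fcurv A) μ ν) := by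
  unfold LieD
  exact ((ContDiff.sum fun i _ => (hX i).mul (pdR_smooth (Fcurv_smooth hA) i)).add
    (ContDiff.sum fun i _ => (pdR_smooth (hX i) μ).mul (Fcurv_smooth hA))).add
    (ContDiff.sum fun i _ => (pdR_smooth (hX i) ν).mul (Fcurv_smooth hA))

lemma brkt_smooth (hX : ∀ κ, ContDiff ℝ (⊤ : ℕ∞) (X κ)) (hY : ∀ κ, ContDiff ℝ (⊤ : ℕ∞) (Y κ)) (μ : Fin 4) :
    ContDiff ℝ (⊤ : ℕ∞) (brkt X Y μ) := by
  unfold brkt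
  exact ContDiff.sum fun i _ =>
    ((hX i).mul (pdR_smooth (hY μ) i)).sub ((hY i).mul (pdR_smooth (hX μ) i))

-- the scalar (divergence) identity, using Killing of X

lemma scalid (hA : ∀ κ, ContDiff ℝ (⊤ : ℕ∞) (A κ)) (hX : ∀ κ, ContDiff ℝ (⊤ : ℕ∞) (X κ))
    (hY : ∀ κ, ContDiff ℝ (⊤ : ℕ∞) (Y κ)) (hKX : IsKilling X) (x : V4) :
    (∑ l, X l x * pdR l (Tf A Y) x)
      = (∑ μ, mSign μ * pdR μ (fun y => ∑ ν, Y ν y * LieD X (Fcurv A) μ ν y) x)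
        + (∑ μ, mSign μ * pdR μ (fun y => ∑ ν, brkt X Y ν y * Fcurv A μ ν y) x) := by
  -- step 1: rewrite RHS functions using vecid
  have hfun : ∀ μ : Fin 4, (fun y => (∑ ν, Y ν y * LieD X (Fcurv A) μ ν y)
        + (∑ ν, brkt X Y ν y * Fcurv A μ ν y))
      = fun y => (∑ l, X l y * pdR l (YGf A Y μ) y) + (∑ k, pdR μ (X k) y * YGf A Y k y) :=
    fun μ => funext fun y => (vecid hA hY μ y).symm
  have hd1 : ∀ μ x, DifferentiableAt ℝ (fun y => ∑ ν, Y ν y * LieD X (Fcurv A) μ ν y) x :=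
    fun μ x => dAtR (ContDiff.sum fun i _ => (hY i).mul (LieD_smooth hA hX μ i)) x
  have hd2 : ∀ μ x, DifferentiableAt ℝ (fun y => ∑ ν, brkt X Y ν y * Fcurv A μ ν y) x :=
    fun μ x => dAtR (ContDiff.sum fun i _ => (brkt_smooth hX hY i).mul (Fcurv_smooth hA)) x
  have hRHS : (∑ μ, mSign μ * pdR μ (fun y => ∑ ν, Y ν y * LieD X (Fcurv A) μ ν y) x)
        + (∑ μ, mSign μ * pdR μ (fun y => ∑ ν, brkt X Y ν y * Fcurv A μ ν y) x)
      = ∑ μ, mSign μ * pdR μ (fun y => (∑ l, X l y * pdR l (YGf A Y μ) y)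
          + (∑ k, pdR μ (X k) y * YGf A Y k y)) x := by
    rw [← Finset.sum_add_distrib]
    refine Finset.sum_congr rfl fun μ _ => ?_
    rw [← hfun μ, pdR_add (hd1 μ x) (hd2 μ x)]
    ring
  -- step 2: expand
  have hexp : ∀ μ, pdR μ (fun y => (∑ l, X l y * pdR l (YGf A Y μ) y)
          + (∑ k, pdR μ (X k) y * YGf A Y k y)) x
      = (∑ l, (pdR μ (X l) x * pdR l (YGf A Y μ) x
          + X l x * pdR μ (pdR l (YGf A Y μ)) x))
        + (∑ k, pdR μ (X k) x * pdR μ (YGf A Y k) x) := by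
    intro μ
    rw [pdR_add (dAtR (ContDiff.sum fun i _ => (hX i).mul
        (pdR_smooth (YGf_smooth hA hY μ) i)) x)
      (dAtR (ContDiff.sum fun i _ => (pdR_smooth (hX i) μ).mul (YGf_smooth hA hY i)) x),
      pdR_sum (fun i _ => dAtR ((hX i).mul (pdR_smooth (YGf_smooth hA hY μ) i)) x),
      pdR_sum (fun i _ => dAtR ((pdR_smooth (hX i) μ).mul (YGf_smooth hA hY i)) x)]
    congr 1
    · exact Finset.sum_congr rfl fun l _ =>
        pdR_mul (dAtR (hX l) x) (dAtR (pdR_smooth (YGf_smooth hA hY μ) l) x)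
    · refine Finset.sum_congr rfl fun k _ => ?_
      rw [pdR_mul (dAtR (pdR_smooth (hX k) μ) x) (dAtR (YGf_smooth hA hY k) x),
        killing_second hX hKX μ μ k x]
      ring
  -- step 3: expand LHS
  have hT : ∀ l, pdR l (Tf A Y) x = ∑ μ, mSign μ * pdR μ (pdR l (YGf A Y μ)) x := by
    intro l
    have h : Tf A Y = fun y => ∑ μ, mSign μ * pdR μ (YGf A Y μ) y := rfl
    rw [h, pdR_sum (fun i _ => dAtR (contDiff_const.mul
      (pdR_smooth (YGf_smooth hA hY i) i)) x)]
    refine Finset.sum_congr rfl fun μ _ => ?_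
    rw [pdR_const_mul _ (dAtR (pdR_smooth (YGf_smooth hA hY μ) μ) x),
      pdR_comm (YGf_smooth hA hY μ) l μ x]
  -- step 4: Killing cancellation
  have hS : (∑ μ, ∑ k, mSign μ * pdR μ (X k) x * pdR μ (YGf A Y k) x)
      = -∑ μ, ∑ l, mSign μ * pdR μ (X l) x * pdR l (YGf A Y μ) x := by
    have h1 : ∀ μ k : Fin 4, mSign μ * pdR μ (X k) x * pdR μ (YGf A Y k) x
        = -(mSign k * pdR k (X μ) x * pdR μ (YGf A Y k) x) := fun μ k => by
      linear_combination pdR μ (YGf A Y k) x * killing_raise hKX k μ x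
    calc (∑ μ, ∑ k, mSign μ * pdR μ (X k) x * pdR μ (YGf A Y k) x)
        = ∑ μ, ∑ k, -(mSign k * pdR k (X μ) x * pdR μ (YGf A Y k) x) :=
          Finset.sum_congr rfl fun μ _ => Finset.sum_congr rfl fun k _ => h1 μ k
      _ = -∑ μ, ∑ k, mSign k * pdR k (X μ) x * pdR μ (YGf A Y k) x := by
          simp [Finset.sum_neg_distrib]
      _ = -∑ k, ∑ μ, mSign k * pdR k (X μ) x * pdR μ (YGf A Y k) x := by
          rw [Finset.sum_comm]
  -- final assembly
  rw [hRHS]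
  have hR2 : (∑ μ, mSign μ * pdR μ (fun y => (∑ l, X l y * pdR l (YGf A Y μ) y)
          + (∑ k, pdR μ (X k) y * YGf A Y k y)) x)
      = ((∑ μ, ∑ l, mSign μ * pdR μ (X l) x * pdR l (YGf A Y μ) x)
          + (∑ μ, ∑ l, mSign μ * (X l x * pdR μ (pdR l (YGf A Y μ)) x)))
        + (∑ μ, ∑ k, mSign μ * pdR μ (X k) x * pdR μ (YGf A Y k) x) := by
    have h2 : ∀ μ : Fin 4, mSign μ * pdR μ (fun y => (∑ l, X l y * pdR l (YGf A Y μ) y)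
          + (∑ k, pdR μ (X k) y * YGf A Y k y)) x
        = ((∑ l, mSign μ * pdR μ (X l) x * pdR l (YGf A Y μ) x)
            + (∑ l, mSign μ * (X l x * pdR μ (pdR l (YGf A Y μ)) x)))
          + (∑ k, mSign μ * pdR μ (X k) x * pdR μ (YGf A Y k) x) := by
      intro μ
      rw [hexp μ, mul_add, Finset.mul_sum, Finset.mul_sum]
      congr 1
      · rw [← Finset.sum_add_distrib]
        exact Finset.sum_congr rfl fun l _ => by ring
      · exact Finset.sum_congr rfl fun k _ => by ring
    rw [Finset.sum_congr rfl fun μ _ => h2 μ]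
    simp [Finset.sum_add_distrib]
  rw [hR2, hS]
  have hL : (∑ l, X l x * pdR l (Tf A Y) x)
      = ∑ μ, ∑ l, mSign μ * (X l x * pdR μ (pdR l (YGf A Y μ)) x) := by
    calc (∑ l, X l x * pdR l (Tf A Y) x)
        = ∑ l, ∑ μ, X l x * (mSign μ * pdR μ (pdR l (YGf A Y μ)) x) := by
          refine Finset.sum_congr rfl fun l _ => ?_
          rw [hT l, Finset.mul_sum]
      _ = ∑ μ, ∑ l, mSign μ * (X l x * pdR μ (pdR l (YGf A Y μ)) x) := by
          rw [Finset.sum_comm]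
          exact Finset.sum_congr rfl fun μ _ => Finset.sum_congr rfl fun l _ => by ring
  rw [hL]
  ring

lemma DX_Q (hA : ∀ κ, ContDiff ℝ (⊤ : ℕ∞) (A κ)) (hX : ∀ κ, ContDiff ℝ (⊤ : ℕ∞) (X κ))
    (hY : ∀ κ, ContDiff ℝ (⊤ : ℕ∞) (Y κ)) (hφ : ContDiff ℝ (⊤ : ℕ∞) φ) (hKX : IsKilling X) (x : V4) :
    DZ A X (Qform A (Fcurv A) φ Y) x
      = Qform A (Fcurv A) (DZ A X φ) Y x + Qform A (LieD X (Fcurv A)) φ Y x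
        + Qform A (Fcurv A) φ (brkt X Y) x
        - 2 * ((∑ μ, mSign μ * (∑ l, X l x * Fcurv A l μ x) *
            (∑ k, Fcurv A μ k x * Y k x) : ℝ) : ℂ) * φ x := by
  have hYG : ∀ μ : Fin 4, ContDiff ℝ (⊤ : ℕ∞) (YGf A Y μ) := YGf_smooth hA hY
  have hTs : ContDiff ℝ (⊤ : ℕ∞) (Tf A Y) := Tf_smooth hA hY
  have hDφ : ∀ μ : Fin 4, ContDiff ℝ (⊤ : ℕ∞) (Dc A μ φ) := Dc_smooth hA hφ
  have hq : Qform A (Fcurv A) φ Y = fun y =>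
      (2*Complex.I * ∑ μ, (mSign μ:ℂ) * ((YGf A Y μ y : ℝ):ℂ) * Dc A μ φ y)
      + Complex.I * ((Tf A Y y : ℝ):ℂ) * φ y := rfl
  have hq1s : ContDiff ℝ (⊤ : ℕ∞) (fun y => 2*Complex.I *
      ∑ μ, (mSign μ:ℂ) * ((YGf A Y μ y:ℝ):ℂ) * Dc A μ φ y) :=
    contDiff_const.mul (ContDiff.sum fun i _ =>
      (contDiff_const.mul (ofReal_smooth (hYG i))).mul (hDφ i))
  have hq2s : ContDiff ℝ (⊤ : ℕ∞) (fun y => Complex.I * ((Tf A Y y:ℝ):ℂ) * φ y) :=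
    (contDiff_const.mul (ofReal_smooth hTs)).mul hφ
  have hDcQ : ∀ l : Fin 4, Dc A l (Qform A (Fcurv A) φ Y) x
      = (2*Complex.I * ∑ μ, (mSign μ:ℂ) * (((pdR l (YGf A Y μ) x:ℝ):ℂ) * Dc A μ φ x
          + ((YGf A Y μ x:ℝ):ℂ) * Dc A l (Dc A μ φ) x))
        + Complex.I * (((pdR l (Tf A Y) x:ℝ):ℂ) * φ x + ((Tf A Y x:ℝ):ℂ) * Dc A l φ x) := by
    intro l
    rw [hq, Dc_add (dAt hq1s x) (dAt hq2s x),
      Dc_const_mul (2*Complex.I) (dAt (ContDiff.sum fun i _ =>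
        (contDiff_const.mul (ofReal_smooth (hYG i))).mul (hDφ i)) x),
      Dc_sum (fun i => dAt ((contDiff_const.mul (ofReal_smooth (hYG i))).mul (hDφ i)) x),
      Dc_cr_mul Complex.I (dAtR hTs x) (dAt hφ x)]
    congr 2
    exact Finset.sum_congr rfl fun μ _ => Dc_cr_mul (mSign μ:ℂ) (dAtR (hYG μ) x) (dAt (hDφ μ) x)
  -- split into four pieces
  have hsplit : DZ A X (Qform A (Fcurv A) φ Y) x
      = (∑ l, ∑ μ, 2*Complex.I*(mSign μ:ℂ) * ((X l x:ℝ):ℂ) * ((pdR l (YGf A Y μ) x:ℝ):ℂ)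
          * Dc A μ φ x)
        + (∑ l, ∑ μ, 2*Complex.I*(mSign μ:ℂ) * ((X l x:ℝ):ℂ) * ((YGf A Y μ x:ℝ):ℂ)
          * Dc A l (Dc A μ φ) x)
        + (∑ l, Complex.I * ((X l x:ℝ):ℂ) * ((pdR l (Tf A Y) x:ℝ):ℂ) * φ x)
        + (∑ l, Complex.I * ((X l x:ℝ):ℂ) * ((Tf A Y x:ℝ):ℂ) * Dc A l φ x) := by
    have hpt : ∀ l : Fin 4, ((X l x:ℝ):ℂ) * Dc A l (Qform A (Fcurv A) φ Y) x
        = ((∑ μ, 2*Complex.I*(mSign μ:ℂ) * ((X l x:ℝ):ℂ) * ((pdR l (YGf A Y μ) x:ℝ):ℂ)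
            * Dc A μ φ x)
          + (∑ μ, 2*Complex.I*(mSign μ:ℂ) * ((X l x:ℝ):ℂ) * ((YGf A Y μ x:ℝ):ℂ)
            * Dc A l (Dc A μ φ) x))
          + (Complex.I * ((X l x:ℝ):ℂ) * ((pdR l (Tf A Y) x:ℝ):ℂ) * φ x
            + Complex.I * ((X l x:ℝ):ℂ) * ((Tf A Y x:ℝ):ℂ) * Dc A l φ x) := by
      intro l
      rw [hDcQ l, mul_add]
      have e1 : ((X l x:ℝ):ℂ) * (2*Complex.I * ∑ μ, (mSign μ:ℂ)
            * (((pdR l (YGf A Y μ) x:ℝ):ℂ) * Dc A μ φ x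
              + ((YGf A Y μ x:ℝ):ℂ) * Dc A l (Dc A μ φ) x))
          = (∑ μ, 2*Complex.I*(mSign μ:ℂ) * ((X l x:ℝ):ℂ) * ((pdR l (YGf A Y μ) x:ℝ):ℂ)
              * Dc A μ φ x)
            + (∑ μ, 2*Complex.I*(mSign μ:ℂ) * ((X l x:ℝ):ℂ) * ((YGf A Y μ x:ℝ):ℂ)
              * Dc A l (Dc A μ φ) x) := by
        rw [Finset.mul_sum, Finset.mul_sum, ← Finset.sum_add_distrib]
        exact Finset.sum_congr rfl fun μ _ => by ring
      rw [e1]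
      ring
    have h0 : DZ A X (Qform A (Fcurv A) φ Y) x
        = ∑ l, (((∑ μ, 2*Complex.I*(mSign μ:ℂ) * ((X l x:ℝ):ℂ) * ((pdR l (YGf A Y μ) x:ℝ):ℂ)
            * Dc A μ φ x)
          + (∑ μ, 2*Complex.I*(mSign μ:ℂ) * ((X l x:ℝ):ℂ) * ((YGf A Y μ x:ℝ):ℂ)
            * Dc A l (Dc A μ φ) x))
          + (Complex.I * ((X l x:ℝ):ℂ) * ((pdR l (Tf A Y) x:ℝ):ℂ) * φ x
            + Complex.I * ((X l x:ℝ):ℂ) * ((Tf A Y x:ℝ):ℂ) * Dc A l φ x)) :=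
      Finset.sum_congr rfl fun l _ => hpt l
    rw [h0]
    simp only [Finset.sum_add_distrib]
    ring
  -- P4
  have hP4 : (∑ l, Complex.I * ((X l x:ℝ):ℂ) * ((Tf A Y x:ℝ):ℂ) * Dc A l φ x)
      = Complex.I * ((Tf A Y x:ℝ):ℂ) * DZ A X φ x := by
    have h : DZ A X φ x = ∑ l, ((X l x:ℝ):ℂ) * Dc A l φ x := rfl
    rw [h, Finset.mul_sum]
    exact Finset.sum_congr rfl fun l _ => by ring
  -- P3
  have hP3 : (∑ l, Complex.I * ((X l x:ℝ):ℂ) * ((pdR l (Tf A Y) x:ℝ):ℂ) * φ x)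
      = Complex.I * ((∑ μ, mSign μ * pdR μ
            (fun y => ∑ ν, Y ν y * LieD X (Fcurv A) μ ν y) x : ℝ):ℂ) * φ x
        + Complex.I * ((∑ μ, mSign μ * pdR μ
            (fun y => ∑ ν, brkt X Y ν y * Fcurv A μ ν y) x : ℝ):ℂ) * φ x := by
    have h1 : (∑ l, Complex.I * ((X l x:ℝ):ℂ) * ((pdR l (Tf A Y) x:ℝ):ℂ) * φ x)
        = Complex.I * ((∑ l, X l x * pdR l (Tf A Y) x : ℝ):ℂ) * φ x := by
      push_cast
      rw [Finset.mul_sum, Finset.sum_mul]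
      exact Finset.sum_congr rfl fun l _ => by ring
    rw [h1, scalid hA hX hY hKX x]
    push_cast
    ring
  -- Killing swap for the X-derivative term
  have hswapX : (∑ μ, ∑ l, 2*Complex.I*(mSign μ:ℂ) * ((pdR μ (X l) x:ℝ):ℂ)
        * ((YGf A Y μ x:ℝ):ℂ) * Dc A l φ x)
      = -(∑ μ, ∑ l, 2*Complex.I*(mSign μ:ℂ) * ((pdR μ (X l) x:ℝ):ℂ)
        * ((YGf A Y l x:ℝ):ℂ) * Dc A μ φ x) := by
    have h1 : ∀ μ l : Fin 4, 2*Complex.I*(mSign μ:ℂ) * ((pdR μ (X l) x:ℝ):ℂ)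
          * ((YGf A Y μ x:ℝ):ℂ) * Dc A l φ x
        = -(2*Complex.I*(mSign l:ℂ) * ((pdR l (X μ) x:ℝ):ℂ)
          * ((YGf A Y μ x:ℝ):ℂ) * Dc A l φ x) := by
      intro μ l
      have hr : ((mSign μ * pdR μ (X l) x : ℝ):ℂ) = ((-(mSign l * pdR l (X μ) x) : ℝ):ℂ) :=
        congrArg _ (killing_raise hKX l μ x)
      push_cast at hr
      linear_combination (2*Complex.I*((YGf A Y μ x:ℝ):ℂ)*Dc A l φ x) * hr
    calc (∑ μ, ∑ l, 2*Complex.I*(mSign μ:ℂ) * ((pdR μ (X l) x:ℝ):ℂ)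
          * ((YGf A Y μ x:ℝ):ℂ) * Dc A l φ x)
        = ∑ μ, ∑ l, -(2*Complex.I*(mSign l:ℂ) * ((pdR l (X μ) x:ℝ):ℂ)
            * ((YGf A Y μ x:ℝ):ℂ) * Dc A l φ x) :=
          Finset.sum_congr rfl fun μ _ => Finset.sum_congr rfl fun l _ => h1 μ l
      _ = ∑ l, ∑ μ, -(2*Complex.I*(mSign l:ℂ) * ((pdR l (X μ) x:ℝ):ℂ)
            * ((YGf A Y μ x:ℝ):ℂ) * Dc A l φ x) := Finset.sum_comm
      _ = -(∑ μ, ∑ l, 2*Complex.I*(mSign μ:ℂ) * ((pdR μ (X l) x:ℝ):ℂ)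
            * ((YGf A Y l x:ℝ):ℂ) * Dc A μ φ x) := by
          simp [Finset.sum_neg_distrib]
  -- the quadratic term
  have hquad : (∑ μ, ∑ l, (-2)*(mSign μ:ℂ) * ((X l x:ℝ):ℂ) * ((Fcurv A l μ x:ℝ):ℂ)
        * ((YGf A Y μ x:ℝ):ℂ) * φ x)
      = -(2 * ((∑ μ, mSign μ * (∑ l, X l x * Fcurv A l μ x) *
          (∑ k, Fcurv A μ k x * Y k x) : ℝ) : ℂ) * φ x) := by
    have hYGx : ∀ μ : Fin 4, ((YGf A Y μ x:ℝ):ℂ)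
        = ∑ k, ((Fcurv A μ k x:ℝ):ℂ) * ((Y k x:ℝ):ℂ) := by
      intro μ
      have h : YGf A Y μ x = ∑ k, Y k x * Fcurv A μ k x := rfl
      rw [h]
      push_cast
      exact Finset.sum_congr rfl fun k _ => by ring
    have hq2 : ∀ μ : Fin 4, (∑ l, (-2)*(mSign μ:ℂ) * ((X l x:ℝ):ℂ) * ((Fcurv A l μ x:ℝ):ℂ)
          * ((YGf A Y μ x:ℝ):ℂ) * φ x)
        = -(((mSign μ:ℝ):ℂ) * (∑ l, ((X l x:ℝ):ℂ) * ((Fcurv A l μ x:ℝ):ℂ))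
            * (∑ k, ((Fcurv A μ k x:ℝ):ℂ) * ((Y k x:ℝ):ℂ)) * (2 * φ x)) := by
      intro μ
      calc (∑ l, (-2)*(mSign μ:ℂ) * ((X l x:ℝ):ℂ) * ((Fcurv A l μ x:ℝ):ℂ)
            * ((YGf A Y μ x:ℝ):ℂ) * φ x)
          = ∑ l, (((X l x:ℝ):ℂ) * ((Fcurv A l μ x:ℝ):ℂ))
              * ((-2)*(mSign μ:ℂ) * ((YGf A Y μ x:ℝ):ℂ) * φ x) :=
            Finset.sum_congr rfl fun l _ => by ring
        _ = (∑ l, ((X l x:ℝ):ℂ) * ((Fcurv A l μ x:ℝ):ℂ))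
              * ((-2)*(mSign μ:ℂ) * ((YGf A Y μ x:ℝ):ℂ) * φ x) := by
            rw [← Finset.sum_mul]
        _ = -(((mSign μ:ℝ):ℂ) * (∑ l, ((X l x:ℝ):ℂ) * ((Fcurv A l μ x:ℝ):ℂ))
              * (∑ k, ((Fcurv A μ k x:ℝ):ℂ) * ((Y k x:ℝ):ℂ)) * (2 * φ x)) := by
            rw [hYGx μ]; ring
    rw [Finset.sum_congr rfl fun μ _ => hq2 μ]
    push_cast
    rw [Finset.sum_neg_distrib]
    congr 1
    rw [Finset.mul_sum, Finset.sum_mul]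
    exact Finset.sum_congr rfl fun μ _ => by ring
  -- per-μ reduction of the second-derivative term
  have hu : ∀ μ : Fin 4, (∑ l, 2*Complex.I*(mSign μ:ℂ) * ((X l x:ℝ):ℂ)
        * ((YGf A Y μ x:ℝ):ℂ) * Dc A μ (Dc A l φ) x)
      = 2*Complex.I*(mSign μ:ℂ) * ((YGf A Y μ x:ℝ):ℂ) * Dc A μ (DZ A X φ) x
        - ∑ l, 2*Complex.I*(mSign μ:ℂ) * ((pdR μ (X l) x:ℝ):ℂ)
          * ((YGf A Y μ x:ℝ):ℂ) * Dc A l φ x := by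
    intro μ
    rw [DcDZ hA hX hφ μ x, Finset.mul_sum, ← Finset.sum_sub_distrib]
    exact Finset.sum_congr rfl fun l _ => by ring
  -- full reduction of P2
  have hP2total : (∑ l, ∑ μ, 2*Complex.I*(mSign μ:ℂ) * ((X l x:ℝ):ℂ)
        * ((YGf A Y μ x:ℝ):ℂ) * Dc A l (Dc A μ φ) x)
      = (∑ μ, 2*Complex.I*(mSign μ:ℂ) * ((YGf A Y μ x:ℝ):ℂ) * Dc A μ (DZ A X φ) x)
        + (∑ μ, ∑ l, 2*Complex.I*(mSign μ:ℂ) * ((pdR μ (X l) x:ℝ):ℂ)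
          * ((YGf A Y l x:ℝ):ℂ) * Dc A μ φ x)
        - 2 * ((∑ μ, mSign μ * (∑ l, X l x * Fcurv A l μ x) *
            (∑ k, Fcurv A μ k x * Y k x) : ℝ) : ℂ) * φ x := by
    have hcpt : ∀ μ l : Fin 4, 2*Complex.I*(mSign μ:ℂ) * ((X l x:ℝ):ℂ)
          * ((YGf A Y μ x:ℝ):ℂ) * Dc A l (Dc A μ φ) x
        = 2*Complex.I*(mSign μ:ℂ) * ((X l x:ℝ):ℂ) * ((YGf A Y μ x:ℝ):ℂ)
            * Dc A μ (Dc A l φ) x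
          + (-2)*(mSign μ:ℂ) * ((X l x:ℝ):ℂ) * ((Fcurv A l μ x:ℝ):ℂ)
            * ((YGf A Y μ x:ℝ):ℂ) * φ x := by
      intro μ l
      have hc := Dc_comm (μ := l) (ν := μ) (x := x) hA hφ
      linear_combination (2*Complex.I*(mSign μ:ℂ) * ((X l x:ℝ):ℂ) * ((YGf A Y μ x:ℝ):ℂ)) * hc
        + (2*(mSign μ:ℂ) * ((X l x:ℝ):ℂ) * ((YGf A Y μ x:ℝ):ℂ) * ((Fcurv A l μ x:ℝ):ℂ) * φ x)
          * Complex.I_sq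
    calc (∑ l, ∑ μ, 2*Complex.I*(mSign μ:ℂ) * ((X l x:ℝ):ℂ)
          * ((YGf A Y μ x:ℝ):ℂ) * Dc A l (Dc A μ φ) x)
        = ∑ μ, ∑ l, 2*Complex.I*(mSign μ:ℂ) * ((X l x:ℝ):ℂ)
            * ((YGf A Y μ x:ℝ):ℂ) * Dc A l (Dc A μ φ) x := Finset.sum_comm
      _ = ∑ μ, ∑ l, (2*Complex.I*(mSign μ:ℂ) * ((X l x:ℝ):ℂ) * ((YGf A Y μ x:ℝ):ℂ)
            * Dc A μ (Dc A l φ) x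
          + (-2)*(mSign μ:ℂ) * ((X l x:ℝ):ℂ) * ((Fcurv A l μ x:ℝ):ℂ)
            * ((YGf A Y μ x:ℝ):ℂ) * φ x) :=
          Finset.sum_congr rfl fun μ _ => Finset.sum_congr rfl fun l _ => hcpt μ l
      _ = (∑ μ, ∑ l, 2*Complex.I*(mSign μ:ℂ) * ((X l x:ℝ):ℂ) * ((YGf A Y μ x:ℝ):ℂ)
            * Dc A μ (Dc A l φ) x)
          + ∑ μ, ∑ l, (-2)*(mSign μ:ℂ) * ((X l x:ℝ):ℂ) * ((Fcurv A l μ x:ℝ):ℂ)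
            * ((YGf A Y μ x:ℝ):ℂ) * φ x := by
          simp [Finset.sum_add_distrib]
      _ = ((∑ μ, 2*Complex.I*(mSign μ:ℂ) * ((YGf A Y μ x:ℝ):ℂ) * Dc A μ (DZ A X φ) x)
            - ∑ μ, ∑ l, 2*Complex.I*(mSign μ:ℂ) * ((pdR μ (X l) x:ℝ):ℂ)
              * ((YGf A Y μ x:ℝ):ℂ) * Dc A l φ x)
          + ∑ μ, ∑ l, (-2)*(mSign μ:ℂ) * ((X l x:ℝ):ℂ) * ((Fcurv A l μ x:ℝ):ℂ)
            * ((YGf A Y μ x:ℝ):ℂ) * φ x := by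
          rw [Finset.sum_congr rfl fun μ _ => hu μ, Finset.sum_sub_distrib]
      _ = (∑ μ, 2*Complex.I*(mSign μ:ℂ) * ((YGf A Y μ x:ℝ):ℂ) * Dc A μ (DZ A X φ) x)
          + (∑ μ, ∑ l, 2*Complex.I*(mSign μ:ℂ) * ((pdR μ (X l) x:ℝ):ℂ)
            * ((YGf A Y l x:ℝ):ℂ) * Dc A μ φ x)
          - 2 * ((∑ μ, mSign μ * (∑ l, X l x * Fcurv A l μ x) *
            (∑ k, Fcurv A μ k x * Y k x) : ℝ) : ℂ) * φ x := by
          rw [hswapX, hquad]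
          ring
  -- merging P1 with the swapped term via the vector identity
  have hmerge : (∑ l, ∑ μ, 2*Complex.I*(mSign μ:ℂ) * ((X l x:ℝ):ℂ)
        * ((pdR l (YGf A Y μ) x:ℝ):ℂ) * Dc A μ φ x)
      + (∑ μ, ∑ l, 2*Complex.I*(mSign μ:ℂ) * ((pdR μ (X l) x:ℝ):ℂ)
        * ((YGf A Y l x:ℝ):ℂ) * Dc A μ φ x)
      = (2 * Complex.I * ∑ μ, (mSign μ:ℂ)
          * ((∑ ν, Y ν x * LieD X (Fcurv A) μ ν x : ℝ):ℂ) * Dc A μ φ x)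
        + (2 * Complex.I * ∑ μ, (mSign μ:ℂ)
          * ((∑ ν, brkt X Y ν x * Fcurv A μ ν x : ℝ):ℂ) * Dc A μ φ x) := by
    have hm : ∀ μ : Fin 4,
        (∑ l, 2*Complex.I*(mSign μ:ℂ) * ((X l x:ℝ):ℂ)
          * ((pdR l (YGf A Y μ) x:ℝ):ℂ) * Dc A μ φ x)
        + (∑ l, 2*Complex.I*(mSign μ:ℂ) * ((pdR μ (X l) x:ℝ):ℂ)
          * ((YGf A Y l x:ℝ):ℂ) * Dc A μ φ x)
        = (mSign μ:ℂ) * ((∑ ν, Y ν x * LieD X (Fcurv A) μ ν x : ℝ):ℂ)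
            * Dc A μ φ x * (2*Complex.I)
          + (mSign μ:ℂ) * ((∑ ν, brkt X Y ν x * Fcurv A μ ν x : ℝ):ℂ)
            * Dc A μ φ x * (2*Complex.I) := by
      intro μ
      have hv := vecid (X := X) hA hY μ x
      have hv2 : ((∑ l, X l x * pdR l (YGf A Y μ) x : ℝ):ℂ)
            + ((∑ k, pdR μ (X k) x * YGf A Y k x : ℝ):ℂ)
          = ((∑ ν, Y ν x * LieD X (Fcurv A) μ ν x : ℝ):ℂ)
            + ((∑ ν, brkt X Y ν x * Fcurv A μ ν x : ℝ):ℂ) := by exact_mod_cast hv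
      have e1 : (∑ l, 2*Complex.I*(mSign μ:ℂ) * ((X l x:ℝ):ℂ)
            * ((pdR l (YGf A Y μ) x:ℝ):ℂ) * Dc A μ φ x)
          = ((∑ l, X l x * pdR l (YGf A Y μ) x : ℝ):ℂ)
            * (2*Complex.I*(mSign μ:ℂ) * Dc A μ φ x) := by
        push_cast
        rw [Finset.sum_mul]
        exact Finset.sum_congr rfl fun l _ => by ring
      have e2 : (∑ l, 2*Complex.I*(mSign μ:ℂ) * ((pdR μ (X l) x:ℝ):ℂ)
            * ((YGf A Y l x:ℝ):ℂ) * Dc A μ φ x)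
          = ((∑ k, pdR μ (X k) x * YGf A Y k x : ℝ):ℂ)
            * (2*Complex.I*(mSign μ:ℂ) * Dc A μ φ x) := by
        push_cast
        rw [Finset.sum_mul]
        exact Finset.sum_congr rfl fun l _ => by ring
      rw [e1, e2, ← add_mul, hv2, add_mul]
      ring
    calc (∑ l, ∑ μ, 2*Complex.I*(mSign μ:ℂ) * ((X l x:ℝ):ℂ)
          * ((pdR l (YGf A Y μ) x:ℝ):ℂ) * Dc A μ φ x)
        + (∑ μ, ∑ l, 2*Complex.I*(mSign μ:ℂ) * ((pdR μ (X l) x:ℝ):ℂ)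
          * ((YGf A Y l x:ℝ):ℂ) * Dc A μ φ x)
        = (∑ μ, ∑ l, 2*Complex.I*(mSign μ:ℂ) * ((X l x:ℝ):ℂ)
            * ((pdR l (YGf A Y μ) x:ℝ):ℂ) * Dc A μ φ x)
          + (∑ μ, ∑ l, 2*Complex.I*(mSign μ:ℂ) * ((pdR μ (X l) x:ℝ):ℂ)
            * ((YGf A Y l x:ℝ):ℂ) * Dc A μ φ x) := by rw [Finset.sum_comm]
      _ = ∑ μ, ((∑ l, 2*Complex.I*(mSign μ:ℂ) * ((X l x:ℝ):ℂ)
            * ((pdR l (YGf A Y μ) x:ℝ):ℂ) * Dc A μ φ x)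
          + (∑ l, 2*Complex.I*(mSign μ:ℂ) * ((pdR μ (X l) x:ℝ):ℂ)
            * ((YGf A Y l x:ℝ):ℂ) * Dc A μ φ x)) := by
          rw [Finset.sum_add_distrib]
      _ = ∑ μ, ((mSign μ:ℂ) * ((∑ ν, Y ν x * LieD X (Fcurv A) μ ν x : ℝ):ℂ)
            * Dc A μ φ x * (2*Complex.I)
          + (mSign μ:ℂ) * ((∑ ν, brkt X Y ν x * Fcurv A μ ν x : ℝ):ℂ)
            * Dc A μ φ x * (2*Complex.I)) :=
          Finset.sum_congr rfl fun μ _ => hm μ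
      _ = (2 * Complex.I * ∑ μ, (mSign μ:ℂ)
            * ((∑ ν, Y ν x * LieD X (Fcurv A) μ ν x : ℝ):ℂ) * Dc A μ φ x)
          + (2 * Complex.I * ∑ μ, (mSign μ:ℂ)
            * ((∑ ν, brkt X Y ν x * Fcurv A μ ν x : ℝ):ℂ) * Dc A μ φ x) := by
          rw [Finset.sum_add_distrib, Finset.mul_sum, Finset.mul_sum]
          congr 1
          · exact Finset.sum_congr rfl fun μ _ => by ring
          · exact Finset.sum_congr rfl fun μ _ => by ring
  -- reassembling: the three Qform targets, definitionally
  have hQ1 : Qform A (Fcurv A) (DZ A X φ) Y x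
      = 2 * Complex.I * (∑ μ, (mSign μ:ℂ) * ((YGf A Y μ x:ℝ):ℂ) * Dc A μ (DZ A X φ) x)
        + Complex.I * ((Tf A Y x:ℝ):ℂ) * DZ A X φ x := rfl
  have hQ2 : Qform A (LieD X (Fcurv A)) φ Y x
      = 2 * Complex.I * (∑ μ, (mSign μ:ℂ)
          * ((∑ ν, Y ν x * LieD X (Fcurv A) μ ν x : ℝ):ℂ) * Dc A μ φ x)
        + Complex.I * ((∑ μ, mSign μ * pdR μ
            (fun y => ∑ ν, Y ν y * LieD X (Fcurv A) μ ν y) x : ℝ):ℂ) * φ x := rfl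
  have hQ3 : Qform A (Fcurv A) φ (brkt X Y) x
      = 2 * Complex.I * (∑ μ, (mSign μ:ℂ)
          * ((∑ ν, brkt X Y ν x * Fcurv A μ ν x : ℝ):ℂ) * Dc A μ φ x)
        + Complex.I * ((∑ μ, mSign μ * pdR μ
            (fun y => ∑ ν, brkt X Y ν y * Fcurv A μ ν y) x : ℝ):ℂ) * φ x := rfl
  have hR1 : (∑ μ, 2*Complex.I*(mSign μ:ℂ) * ((YGf A Y μ x:ℝ):ℂ) * Dc A μ (DZ A X φ) x)
      = 2 * Complex.I * (∑ μ, (mSign μ:ℂ) * ((YGf A Y μ x:ℝ):ℂ) * Dc A μ (DZ A X φ) x) := by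
    rw [Finset.mul_sum]
    exact Finset.sum_congr rfl fun μ _ => by ring
  rw [hsplit, hP2total, hP3, hP4, hR1, hQ1, hQ2, hQ3]
  linear_combination hmerge

end L2

lemma DZ_add {A X : Fin 4 → V4 → ℝ} {f g : V4 → ℂ} {x : V4}
    (hf : DifferentiableAt ℝ f x) (hg : DifferentiableAt ℝ g x) :
    DZ A X (fun y => f y + g y) x = DZ A X f x + DZ A X g x := by
  unfold DZ
  rw [← Finset.sum_add_distrib]
  exact Finset.sum_congr rfl fun μ _ => by rw [Dc_add hf hg]; ring

lemma Qform_smooth {A Y : Fin 4 → V4 → ℝ} {φ : V4 → ℂ}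
    (hA : ∀ κ, ContDiff ℝ (⊤ : ℕ∞) (A κ)) (hY : ∀ κ, ContDiff ℝ (⊤ : ℕ∞) (Y κ)) (hφ : ContDiff ℝ (⊤ : ℕ∞) φ) :
    ContDiff ℝ (⊤ : ℕ∞) (Qform A (Fcurv A) φ Y) := by
  have hq : Qform A (Fcurv A) φ Y = fun y =>
      (2*Complex.I * ∑ μ, (mSign μ:ℂ) * ((YGf A Y μ y : ℝ):ℂ) * Dc A μ φ y)
      + Complex.I * ((Tf A Y y : ℝ):ℂ) * φ y := rfl
  rw [hq]
  exact (contDiff_const.mul (ContDiff.sum fun i _ =>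
    (contDiff_const.mul (ofReal_smooth (YGf_smooth hA hY i))).mul (Dc_smooth hA hφ i))).add
    ((contDiff_const.mul (ofReal_smooth (Tf_smooth hA hY))).mul hφ)

/-- second-order covariant commutator: for Killing `X`, `Y`,
`□_A(D_XD_Yφ) − D_XD_Y(□_Aφ) = Q(F,D_Xφ,Y) + Q(F,D_Yφ,X) + Q(𝓛_XF,φ,Y) + Q(F,φ,[X,Y])
  − 2(X^λF_{λμ})(m^{μν}F_{νκ}Y^κ)φ`. -/
theorem second_order_commutator
    (A : Fin 4 → V4 → ℝ) (φ : V4 → ℂ) (X Y : Fin 4 → V4 → ℝ)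
    (hA : ∀ μ, ContDiff ℝ (⊤ : ℕ∞) (A μ)) (hφ : ContDiff ℝ (⊤ : ℕ∞) φ)
    (hXsmooth : ∀ μ, ContDiff ℝ (⊤ : ℕ∞) (X μ)) (hYsmooth : ∀ μ, ContDiff ℝ (⊤ : ℕ∞) (Y μ))
    (hX : IsKilling X) (hY : IsKilling Y) :
    ∀ x, boxA A (DZ A X (DZ A Y φ)) x - DZ A X (DZ A Y (boxA A φ)) x =
      Qform A (Fcurv A) (DZ A X φ) Y x + Qform A (Fcurv A) (DZ A Y φ) X x
        + Qform A (LieD X (Fcurv A)) φ Y x + Qform A (Fcurv A) φ (brkt X Y) x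
        - 2 * ((∑ μ, mSign μ * (∑ l, X l x * Fcurv A l μ x) *
            (∑ k, Fcurv A μ k x * Y k x) : ℝ) : ℂ) * φ x := by

  intro x
  have hχ : ContDiff ℝ (⊤ : ℕ∞) (DZ A Y φ) := DZ_smooth hA hYsmooth hφ
  have h1 := comm_box hA hXsmooth hχ hX x
  have h2 : boxA A (DZ A Y φ) = fun y => DZ A Y (boxA A φ) y + Qform A (Fcurv A) φ Y y :=
    funext fun y => by linear_combination comm_box hA hYsmooth hφ hY y
  have h3 : DZ A X (boxA A (DZ A Y φ)) x
      = DZ A X (DZ A Y (boxA A φ)) x + DZ A X (Qform A (Fcurv A) φ Y) x := by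
    rw [h2, DZ_add (dAt (DZ_smooth hA hYsmooth (boxA_smooth hA hφ)) x)
      (dAt (Qform_smooth hA hYsmooth hφ) x)]
  have h4 := DX_Q hA hXsmooth hYsmooth hφ hX x
  linear_combination h1 + h3 + h4
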